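/- arXiv:2509.21416 — 3 statements merged into one kernel-verified Lean document; each statement's English description precedes it below -/
import Mathlib

section
/- Let g, ρ, γ be real numbers with 0 < g ≤ ρ < γ ≤ 1, and let z be a complex number with |z| = 1. Then γ · |γz − g²| > ρ · g · |γz − 1|. -/
/-!
On the unit circle `‖γz - a‖² = (γ - a)² + 2γa(1 - Re z)`, so after squaring, the difference
`γ²‖γz - g²‖² - ρ²g²‖γz - 1‖²` equals its value at `z = 1` plus `2γg²(γ² - ρ²)(1 - Re z) ≥ 0`.
At `z = 1` the inequality reads `ρg(1 - γ) < γ(γ - g²)`, which holds because replacing `ρ` by the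
larger `γ` on the left leaves the gap `γ(γ - g)(1 + g) > 0`.
-/

lemma Complex.norm_ofReal_mul_sub_ofReal_sq {z : ℂ} (hz : ‖z‖ = 1) (γ a : ℝ) :
    ‖(γ : ℂ) * z - a‖ ^ 2 = (γ - a) ^ 2 + 2 * γ * a * (1 - z.re) := by
  have hnormSq : z.re * z.re + z.im * z.im = 1 := by
    rw [← Complex.normSq_apply, Complex.normSq_eq_norm_sq, hz, one_pow]
  rw [Complex.sq_norm, Complex.normSq_apply]
  simp only [Complex.sub_re, Complex.sub_im, Complex.mul_re, Complex.mul_im, Complex.ofReal_re,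
    Complex.ofReal_im]
  linear_combination γ ^ 2 * hnormSq

lemma mul_one_sub_lt_mul_sub_sq {g ρ γ : ℝ} (hg : 0 ≤ g) (hgρ : g ≤ ρ) (hργ : ρ < γ)
    (hγ : γ ≤ 1) : ρ * g * (1 - γ) < γ * (γ - g ^ 2) :=
  calc ρ * g * (1 - γ) ≤ γ * g * (1 - γ) := by gcongr
    _ < γ * g * (1 - γ) + γ * (γ - g) * (1 + g) :=
      lt_add_of_pos_right _ (mul_pos (mul_pos (by linarith) (by linarith)) (by linarith))
    _ = γ * (γ - g ^ 2) := by ring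

theorem spr_key_inequality (g ρ γ : ℝ) (hg : 0 < g) (hgρ : g ≤ ρ) (hργ : ρ < γ)
    (hγ : γ ≤ 1) (z : ℂ) (hz : ‖z‖ = 1) :
    ρ * g * ‖(γ : ℂ) * z - 1‖ < γ * ‖(γ : ℂ) * z - (g : ℂ) ^ 2‖ := by
  have hγ0 : 0 < γ := by linarith
  have hre : 0 ≤ 1 - z.re := sub_nonneg.2 (hz ▸ Complex.re_le_norm z)
  have hρ_sq : ρ ^ 2 ≤ γ ^ 2 := pow_le_pow_left₀ (by linarith) hργ.le 2
  have h_at_one : (ρ * g * (1 - γ)) ^ 2 < (γ * (γ - g ^ 2)) ^ 2 :=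
    pow_lt_pow_left₀ (mul_one_sub_lt_mul_sub_sq hg.le hgρ hργ hγ)
      (mul_nonneg (mul_nonneg (by linarith) hg.le) (by linarith)) two_ne_zero
  have h_away : 0 ≤ 2 * γ * g ^ 2 * (γ ^ 2 - ρ ^ 2) * (1 - z.re) :=
    mul_nonneg (mul_nonneg (by positivity) (by linarith)) hre
  refine lt_of_pow_lt_pow_left₀ 2 (mul_nonneg hγ0.le (norm_nonneg _)) ?_
  have h1 := Complex.norm_ofReal_mul_sub_ofReal_sq hz γ 1
  have hg2 := Complex.norm_ofReal_mul_sub_ofReal_sq hz γ (g ^ 2)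
  push_cast at h1 hg2
  rw [mul_pow, mul_pow, mul_pow, h1, hg2]
  linarith
end

section
/- Let g, ρ be real numbers with 0 < g ≤ ρ < 1. Then every complex root z of the quadratic z² − g(g + ρ) z + ρg = 0 satisfies |z| ≤ ρ. Consequently, for every γ ∈ (ρ, 1], all poles of the rational function z ↦ (γz(γz − g²) + ρg(γz − 1)) / (γz(γz − g²) − ρg(γz − 1)) lie strictly inside the open unit disk, i.e., the transfer function is stable. -/
/-!
For a root `z = x + iy` of `z² - bz + c` with real `b, c`, the imaginary part of the equation
forces `y = 0` or `x = b/2`. A non-real root has `|z|² = c`, its product with its conjugate.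
A real root `x` with `|x| > r` is impossible once `c ≤ r²` and `r|b| ≤ r² + c`:
`t ↦ t² - |b| t + c` is nonnegative at `r` and increasing beyond it, since its vertex `|b|/2`
lies below `r`. For `b = g(g + ρ)`, `c = ρg`, `r = ρ` these conditions are `g ≤ ρ` and `g ≤ 1`.
A pole `z` of the transfer function gives the root `γz`, of modulus `γ|z| > ρ` when `|z| ≥ 1`.
-/

theorem abs_le_of_sq_sub_mul_add_eq_zero {b c r x : ℝ} (hr : 0 < r) (hc : c ≤ r ^ 2)
    (hb : r * |b| ≤ r ^ 2 + c) (hx : x ^ 2 - b * x + c = 0) : |x| ≤ r := by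
  by_contra! hrx
  have hbx : b * x ≤ |b| * |x| := by
    rw [← abs_mul]
    exact le_abs_self _
  have hb2r : |b| ≤ 2 * r := by nlinarith [abs_nonneg b, abs_nonneg x]
  have hgrowth : 0 < (|x| - r) * (|x| + r - |b|) := mul_pos (by linarith) (by linarith)
  nlinarith [sq_abs x]

theorem Complex.normSq_eq_of_sq_sub_mul_add_eq_zero {b c : ℝ} {z : ℂ} (hz : z ^ 2 - b * z + c = 0)
    (him : z.im ≠ 0) : Complex.normSq z = c := by
  have hre : z.re ^ 2 - z.im ^ 2 - b * z.re + c = 0 := by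
    simpa [sq] using congrArg Complex.re hz
  have him_part : z.im * (2 * z.re - b) = 0 := by
    have := congrArg Complex.im hz
    simp [sq] at this
    linear_combination this
  have hvertex : 2 * z.re = b := by
    linarith [(mul_eq_zero.mp him_part).resolve_left him]
  rw [Complex.normSq_apply]
  linear_combination -hre + z.re * hvertex

theorem Complex.norm_le_of_sq_sub_mul_add_eq_zero {b c r : ℝ} (hr : 0 < r) (hc : c ≤ r ^ 2)
    (hb : r * |b| ≤ r ^ 2 + c) {z : ℂ} (hz : z ^ 2 - b * z + c = 0) : ‖z‖ ≤ r := by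
  by_cases him : z.im = 0
  · have hzre : z = z.re := Complex.ext rfl (by simpa using him)
    rw [hzre] at hz ⊢
    rw [Complex.norm_real, Real.norm_eq_abs]
    exact abs_le_of_sq_sub_mul_add_eq_zero hr hc hb (by exact_mod_cast hz)
  · rw [← sq_le_sq₀ (norm_nonneg z) hr.le, Complex.sq_norm,
      Complex.normSq_eq_of_sq_sub_mul_add_eq_zero hz him]
    exact hc

theorem denominator_roots_and_stability (g ρ : ℝ) (hg : 0 < g) (hgρ : g ≤ ρ) (hρ : ρ < 1) :
    (∀ z : ℂ, z ^ 2 - (g : ℂ) * ((g : ℂ) + (ρ : ℂ)) * z + (ρ : ℂ) * (g : ℂ) = 0 →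
      ‖z‖ ≤ ρ) ∧
    ∀ γ ∈ Set.Ioc ρ 1, ∀ z : ℂ, 1 ≤ ‖z‖ →
      (γ : ℂ) * z * ((γ : ℂ) * z - (g : ℂ) ^ 2) - (ρ : ℂ) * (g : ℂ) * ((γ : ℂ) * z - 1) ≠ 0 := by
  have hρ0 : 0 < ρ := hg.trans_le hgρ
  have hroots : ∀ z : ℂ, z ^ 2 - (g : ℂ) * ((g : ℂ) + (ρ : ℂ)) * z + (ρ : ℂ) * (g : ℂ) = 0 →
      ‖z‖ ≤ ρ := by
    intro z hz
    refine Complex.norm_le_of_sq_sub_mul_add_eq_zero (b := g * (g + ρ)) (c := ρ * g) hρ0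
      (by nlinarith) ?_ (by push_cast; exact hz)
    rw [abs_of_pos (by positivity)]
    nlinarith [mul_pos hρ0 (add_pos hg hρ0)]
  refine ⟨hroots, ?_⟩
  rintro γ ⟨hργ, -⟩ z hz hpole
  have hγz := hroots (γ * z) (by linear_combination hpole)
  rw [norm_mul, Complex.norm_real, Real.norm_of_nonneg (hρ0.trans hργ).le] at hγz
  nlinarith
end

section
/- Let a ∈ ℝ with |a| ≤ 1 and G ∈ ℝ with 0 ≤ G ≤ 1. Then every complex root z of the quadratic z² − G(1 + a) z + G a = 0 satisfies |z| ≤ max(√G, |a|). -/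
/-!
A monic real quadratic `q z = z ^ 2 + b z + c` has all its complex roots in the closed disc of
radius `ρ` once `c ≤ ρ ^ 2`, `|b| ≤ 2 ρ` and `q (± ρ) ≥ 0`: a non-real root comes with its
conjugate, so `‖z‖ ^ 2 = c`, while a real root is trapped in `[-ρ, ρ]` because the vertex `-b/2`
lies there and `q` is nonnegative at both ends. For the characteristic polynomial, with
`b = -G (1 + a)`, `c = G a` and `ρ = max (√G) |a| ≤ 1`, these conditions reduce to the AM-GM
inequality `2 G ≤ (1 + G) √G`.
-/

theorem abs_le_of_quadratic_eq_zero {b c ρ x : ℝ} (hbρ : |b| * ρ ≤ ρ ^ 2 + c)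
    (hb : |b| ≤ 2 * ρ) (hx : x ^ 2 + b * x + c = 0) : |x| ≤ ρ := by
  have hρ : 0 ≤ ρ := by linarith [abs_nonneg b]
  have hqρ : 0 ≤ ρ ^ 2 + b * ρ + c := by nlinarith [neg_abs_le b]
  have hq_neg_ρ : 0 ≤ ρ ^ 2 - b * ρ + c := by nlinarith [le_abs_self b]
  rw [abs_le]
  constructor
  · -- `0 = q x = q (-ρ) + (x + ρ) (x - ρ + b)` would force `b > 2 ρ`
    by_contra! hxρ
    nlinarith [le_abs_self b]
  · -- `0 = q x = q ρ + (x - ρ) (x + ρ + b)` would force `b < -2 ρ`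
    by_contra! hxρ
    nlinarith [neg_abs_le b]

theorem Complex.norm_le_of_quadratic_eq_zero {b c ρ : ℝ} (hc : c ≤ ρ ^ 2)
    (hbρ : |b| * ρ ≤ ρ ^ 2 + c) (hb : |b| ≤ 2 * ρ) {z : ℂ}
    (hz : z ^ 2 + b * z + c = 0) : ‖z‖ ≤ ρ := by
  have hre : z.re ^ 2 - z.im ^ 2 + b * z.re + c = 0 := by
    simpa [pow_two] using congrArg Complex.re hz
  have him : z.im * (2 * z.re + b) = 0 := by
    have := congrArg Complex.im hz
    simp only [pow_two, Complex.add_im, Complex.mul_im, Complex.ofReal_re, Complex.ofReal_im,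
      Complex.zero_im] at this
    linarith
  have hρ : 0 ≤ ρ := by linarith [abs_nonneg b]
  rcases mul_eq_zero.mp him with hreal | hvertex
  · have hzx : z = z.re := Complex.ext rfl (by simpa using hreal)
    rw [hzx, Complex.norm_real, Real.norm_eq_abs]
    rw [hreal] at hre
    exact abs_le_of_quadratic_eq_zero hbρ hb (by linarith)
  · have hnormSq : ‖z‖ ^ 2 = c := by
      rw [show b = -2 * z.re by linarith] at hre
      rw [Complex.sq_norm, Complex.normSq_apply]
      linarith
    exact (pow_le_pow_iff_left₀ (norm_nonneg z) hρ two_ne_zero).mp (hnormSq ▸ hc)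

theorem two_mul_le_one_add_mul_sqrt {G : ℝ} (hG : 0 ≤ G) : 2 * G ≤ (1 + G) * √G := by
  have hsq := Real.sq_sqrt hG
  nlinarith [mul_nonneg (Real.sqrt_nonneg G) (sq_nonneg (1 - √G))]

theorem characteristic_roots_bound (a G : ℝ) (ha : |a| ≤ 1) (hG0 : 0 ≤ G) (hG1 : G ≤ 1) :
    ∀ z : ℂ, z ^ 2 - (G : ℂ) * (1 + (a : ℂ)) * z + (G : ℂ) * (a : ℂ) = 0 →
      ‖z‖ ≤ max (Real.sqrt G) |a| := by
  intro z hz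
  set ρ := max (Real.sqrt G) |a|
  have hsqrt_le : √G ≤ ρ := le_max_left _ _
  have habs_le : |a| ≤ ρ := le_max_right _ _
  have hρ_le_one : ρ ≤ 1 := max_le (Real.sqrt_le_one.mpr hG1) ha
  have hG_le : G ≤ ρ := (Real.le_sqrt_self_iff.mpr hG1).trans hsqrt_le
  have hamgm : 2 * G ≤ (1 + G) * ρ := (two_mul_le_one_add_mul_sqrt hG0).trans (by gcongr)
  have ha_le : a ≤ ρ := (le_abs_self a).trans habs_le
  have hneg_a_le : -a ≤ ρ := (neg_le_abs a).trans habs_le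
  have hb : |-(G * (1 + a))| = G * (1 + a) := by
    rw [abs_neg, abs_of_nonneg (mul_nonneg hG0 (by linarith))]
  refine Complex.norm_le_of_quadratic_eq_zero (b := -(G * (1 + a))) (c := G * a) ?_ ?_ ?_ ?_
  · nlinarith [mul_le_mul_of_nonneg_left ha_le hG0]
  · -- `ρ ^ 2 + G a - G (1 + a) ρ = G (1 - ρ) (a + ρ) + ρ ((1 + G) ρ - 2 G)`
    rw [hb]
    linarith [mul_nonneg (mul_nonneg hG0 (sub_nonneg.mpr hρ_le_one))
        (neg_le_iff_add_nonneg.mp hneg_a_le),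
      mul_nonneg (hG0.trans hG_le) (sub_nonneg.mpr hamgm)]
  · rw [hb]
    nlinarith [mul_le_mul_of_nonneg_left ha_le hG0]
  · push_cast
    linear_combination hz
end
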